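/- Let F be a field of characteristic p > 0, G a finite group with p dividing |G|, and V a G-module. If f ∈ F[V] is homogeneous of degree strictly greater than topdeg F[V]_G, then the transfer Tr(f) = Σ_{σ∈G} σ(f) is a decomposable invariant, i.e., Tr(f) lies in (F[V]^G_+)², the square of the maximal homogeneous ideal of the invariant ring. -/

import Mathlib

/-! Since `p ∣ |G|`, every transfer has zero constant term, and `Tr` is `F[V]^G`-linear:
`Tr (c * t) = Tr c * t` for invariant `t`. Above the top degree, `f` lies in the Hilbert ideal,
`f = ∑ cᵢ tᵢ` with `tᵢ` homogeneous invariants of positive degree, so `Tr f = ∑ Tr cᵢ * tᵢ`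
is a sum of products of two elements of `F[V]^G_+`.

The top degree is a supremum in `ℕ`, so it is meaningful only because the degrees in question
are bounded: each `xᵢ ^ |G|` lies in the Hilbert ideal, as `xᵢ` is a root of the monic orbit
polynomial `∏ σ, (T - σ xᵢ)`, whose lower coefficients are homogeneous invariants of positive
degree. -/

set_option synthInstance.maxHeartbeats 1000000
set_option maxHeartbeats 1000000

open MvPolynomial

variable {F G ι : Type*} [Field F] [Group G] [Fintype ι] [DecidableEq ι]

/-- The (left) action of a group element `σ` on the polynomial algebra
`F[V] = S(V^*)` presented as `MvPolynomial ι F`, for a matrix representation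
`ρ : G →* GL(ι, F)` of `G` on `V = (ι → F)`.  It is given by `σ • f = f ∘ σ⁻¹`,
i.e. by linear substitution of the variables using the matrix of `ρ σ⁻¹`. -/
noncomputable def polyAct (ρ : G →* (Matrix ι ι F)ˣ) (σ : G)
    (f : MvPolynomial ι F) : MvPolynomial ι F :=
  MvPolynomial.aeval
    (fun i => ∑ j, ((ρ σ⁻¹ : Matrix ι ι F) i j) • (MvPolynomial.X j : MvPolynomial ι F)) f

/-- A polynomial is invariant if it is fixed by the action of every group element. -/
def IsInv (ρ : G →* (Matrix ι ι F)ˣ) (f : MvPolynomial ι F) : Prop :=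
  ∀ σ : G, polyAct ρ σ f = f

/-- The Hilbert ideal: the ideal of `F[V]` generated by the homogeneous invariants
of positive degree. -/
noncomputable def hilbertIdeal (ρ : G →* (Matrix ι ι F)ˣ) : Ideal (MvPolynomial ι F) :=
  Ideal.span {f : MvPolynomial ι F | (∃ d, 0 < d ∧ f.IsHomogeneous d) ∧ IsInv ρ f}

/-- The top degree of the coinvariant algebra `F[V]_G = F[V]/(Hilbert ideal)`:
the largest degree `d` such that the degree-`d` homogeneous component of `F[V]_G`
is nonzero; since the Hilbert ideal is homogeneous this is the largest `d` for
which some homogeneous polynomial of degree `d` is not in the Hilbert ideal. -/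
noncomputable def topDeg (ρ : G →* (Matrix ι ι F)ˣ) : ℕ :=
  sSup {d : ℕ | ∃ f : MvPolynomial ι F, f.IsHomogeneous d ∧ f ∉ hilbertIdeal ρ}

/-- The dimension of the coinvariant algebra `F[V]_G` as an `F`-vector space. -/
noncomputable def coinvDim (ρ : G →* (Matrix ι ι F)ˣ) : ℕ :=
  Module.finrank F (MvPolynomial ι F ⧸ hilbertIdeal ρ)

/-- The invariant ring `F[V]^G` as a subalgebra of `F[V]`. -/
noncomputable def invAlg (ρ : G →* (Matrix ι ι F)ˣ) : Subalgebra F (MvPolynomial ι F) where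
  carrier := {f | IsInv ρ f}
  mul_mem' := by
    intro a b ha hb σ
    have h : polyAct ρ σ (a * b) = polyAct ρ σ a * polyAct ρ σ b :=
      map_mul (MvPolynomial.aeval _) a b
    rw [h, ha σ, hb σ]
  add_mem' := by
    intro a b ha hb σ
    have h : polyAct ρ σ (a + b) = polyAct ρ σ a + polyAct ρ σ b :=
      map_add (MvPolynomial.aeval _) a b
    rw [h, ha σ, hb σ]
  algebraMap_mem' := by
    intro r σ
    exact (MvPolynomial.aeval _).commutes r

/-- The transfer (trace) map `Tr(f) = Σ_{σ ∈ G} σ(f)`. -/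
noncomputable def transfer [Fintype G] (ρ : G →* (Matrix ι ι F)ˣ)
    (f : MvPolynomial ι F) : MvPolynomial ι F :=
  ∑ σ : G, polyAct ρ σ f

/-- The maximal homogeneous ideal `F[V]^G_+` of the invariant ring: the
invariants with vanishing constant term, as an ideal of `F[V]^G`. -/
noncomputable def augIdeal (ρ : G →* (Matrix ι ι F)ˣ) : Ideal ↥(invAlg ρ) where
  carrier := {f | MvPolynomial.constantCoeff (f : MvPolynomial ι F) = 0}
  zero_mem' := by simp
  add_mem' := by
    intro a b ha hb
    simp only [Set.mem_setOf_eq] at *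
    rw [Subalgebra.coe_add, map_add, ha, hb, add_zero]
  smul_mem' := by
    intro c x hx
    simp only [Set.mem_setOf_eq, smul_eq_mul] at *
    rw [Subalgebra.coe_mul, map_mul, hx, mul_zero]

theorem Polynomial.Monic.pow_natDegree_mem_of_eval_eq_zero {R : Type*} [CommRing R]
    {p : Polynomial R} (hp : p.Monic) {x : R} (hx : p.eval x = 0) {I : Ideal R}
    (hI : ∀ k < p.natDegree, p.coeff k ∈ I) : x ^ p.natDegree ∈ I := by
  have hsum := congrArg (Polynomial.eval x) hp.as_sum
  rw [hx, Polynomial.eval_add, Polynomial.eval_pow, Polynomial.eval_X,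
    Polynomial.eval_finsetSum] at hsum
  rw [eq_neg_of_add_eq_zero_left hsum.symm]
  refine I.neg_mem (I.sum_mem fun k hk => ?_)
  rw [Polynomial.eval_mul, Polynomial.eval_C]
  exact I.mul_mem_right _ (hI k (Finset.mem_range.mp hk))

theorem MvPolynomial.isHomogeneous_coeff_prod_X_add_C {R σ α : Type*} [CommSemiring R]
    {s : Finset α} {r : α → MvPolynomial σ R} {n k : ℕ}
    (hr : ∀ a ∈ s, (r a).IsHomogeneous n) (hk : k ≤ s.card) :
    ((∏ a ∈ s, (Polynomial.X + Polynomial.C (r a))).coeff k).IsHomogeneous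
      ((s.card - k) * n) := by
  rw [Finset.prod_X_add_C_coeff s r hk]
  refine IsHomogeneous.sum _ _ _ fun t ht => ?_
  obtain ⟨hts, htcard⟩ := Finset.mem_powersetCard.mp ht
  simpa [htcard] using IsHomogeneous.prod t r (fun _ => n) fun a ha => hr a (hts ha)

theorem MvPolynomial.IsHomogeneous.mem_of_X_pow_mem {R σ : Type*} [CommSemiring R] [Fintype σ]
    {I : Ideal (MvPolynomial σ R)} {N : ℕ} (hX : ∀ i, X i ^ N ∈ I)
    {f : MvPolynomial σ R} {e : ℕ} (hf : f.IsHomogeneous e)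
    (he : Fintype.card σ * (N - 1) < e) : f ∈ I := by
  classical
  rw [f.as_sum]
  refine I.sum_mem fun m hm => ?_
  have hlt : ∑ _i : σ, (N - 1) < ∑ i, m i := by
    rw [← Finsupp.degree_eq_sum, Finsupp.degree_apply, ← hf.degree_eq_sum_deg_support hm]
    simpa using he
  obtain ⟨i, -, hi⟩ := Finset.exists_lt_of_sum_lt hlt
  have hsplit :
      monomial m (coeff m f) = monomial (m - Finsupp.single i N) (coeff m f) * X i ^ N := by
    rw [X_pow_eq_monomial, monomial_mul, mul_one,
      tsub_add_cancel_of_le (Finsupp.single_le_iff.mpr (by omega))]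
  rw [hsplit]
  exact I.mul_mem_left _ (hX i)

section

variable (ρ : G →* (Matrix ι ι F)ˣ)

noncomputable def polyActHom (σ : G) : MvPolynomial ι F →ₐ[F] MvPolynomial ι F :=
  aeval fun i => ∑ j, ((ρ σ⁻¹ : Matrix ι ι F) i j) • X j

theorem polyActHom_apply (σ : G) (f : MvPolynomial ι F) : polyActHom ρ σ f = polyAct ρ σ f :=
  rfl

theorem polyActHom_one : polyActHom ρ 1 = AlgHom.id F (MvPolynomial ι F) :=
  algHom_ext fun i => by simp [polyActHom, Matrix.one_apply]

theorem polyAct_one (f : MvPolynomial ι F) : polyAct ρ 1 f = f := by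
  rw [← polyActHom_apply, polyActHom_one, AlgHom.id_apply]

theorem polyActHom_mul (τ σ : G) :
    polyActHom ρ (τ * σ) = (polyActHom ρ τ).comp (polyActHom ρ σ) := by
  refine algHom_ext fun i => ?_
  simp only [polyActHom, AlgHom.comp_apply, aeval_X, map_sum, map_smul, mul_inv_rev, map_mul,
    Units.val_mul, Matrix.mul_apply, Finset.sum_smul, Finset.smul_sum, smul_smul]
  exact Finset.sum_comm

theorem polyAct_polyAct (τ σ : G) (f : MvPolynomial ι F) :
    polyAct ρ τ (polyAct ρ σ f) = polyAct ρ (τ * σ) f := by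
  simp only [← polyActHom_apply, polyActHom_mul, AlgHom.comp_apply]

theorem isHomogeneous_polyAct (σ : G) {f : MvPolynomial ι F} {n : ℕ} (hf : f.IsHomogeneous n) :
    (polyAct ρ σ f).IsHomogeneous n := by
  have hlin : ∀ i,
      (∑ j, ((ρ σ⁻¹ : Matrix ι ι F) i j) • (X j : MvPolynomial ι F)).IsHomogeneous 1 :=
    fun i => IsHomogeneous.sum _ _ _ fun j _ =>
      (homogeneousSubmodule ι F 1).smul_mem _ (isHomogeneous_X F j)
  have h := hf.aeval _ hlin
  rwa [one_mul] at h

theorem constantCoeff_polyAct (σ : G) (f : MvPolynomial ι F) :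
    constantCoeff (polyAct ρ σ f) = constantCoeff f := by
  have h : (constantCoeff : MvPolynomial ι F →+* F).comp (polyActHom ρ σ).toRingHom =
      constantCoeff :=
    ringHom_ext (fun r => by simp) (fun i => by simp [polyActHom])
  exact RingHom.congr_fun h f

theorem mem_augIdeal_of_isHomogeneous (t : invAlg ρ) {n : ℕ}
    (ht : (t : MvPolynomial ι F).IsHomogeneous n) (hn : 0 < n) : t ∈ augIdeal ρ := by
  show constantCoeff (t : MvPolynomial ι F) = 0
  rw [constantCoeff_eq]
  exact ht.coeff_eq_zero (by simp; omega)

variable [Fintype G]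

noncomputable def orbitPoly (a : MvPolynomial ι F) : Polynomial (MvPolynomial ι F) :=
  ∏ σ : G, (Polynomial.X - Polynomial.C (polyAct ρ σ a))

theorem orbitPoly_monic (a : MvPolynomial ι F) : (orbitPoly ρ a).Monic :=
  Polynomial.monic_prod_of_monic _ _ fun _ _ => Polynomial.monic_X_sub_C _

theorem natDegree_orbitPoly (a : MvPolynomial ι F) :
    (orbitPoly ρ a).natDegree = Fintype.card G := by
  simp [orbitPoly]

theorem eval_orbitPoly_self (a : MvPolynomial ι F) : (orbitPoly ρ a).eval a = 0 := by
  rw [orbitPoly, Polynomial.eval_prod]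
  exact Finset.prod_eq_zero (Finset.mem_univ 1) (by simp [polyAct_one])

theorem map_orbitPoly (τ : G) (a : MvPolynomial ι F) :
    (orbitPoly ρ a).map (polyActHom ρ τ : MvPolynomial ι F →+* MvPolynomial ι F) =
      orbitPoly ρ a := by
  simp only [orbitPoly, Polynomial.map_prod, Polynomial.map_sub, Polynomial.map_X,
    Polynomial.map_C, RingHom.coe_coe, polyActHom_apply, polyAct_polyAct]
  exact Equiv.prod_comp (Equiv.mulLeft τ) fun σ => Polynomial.X - Polynomial.C (polyAct ρ σ a)

theorem isInv_coeff_orbitPoly (a : MvPolynomial ι F) (k : ℕ) :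
    IsInv ρ ((orbitPoly ρ a).coeff k) := fun τ => by
  conv_rhs => rw [← map_orbitPoly ρ τ a]
  rw [Polynomial.coeff_map]
  rfl

theorem isHomogeneous_coeff_orbitPoly {a : MvPolynomial ι F} {n k : ℕ}
    (ha : a.IsHomogeneous n) (hk : k ≤ Fintype.card G) :
    ((orbitPoly ρ a).coeff k).IsHomogeneous ((Fintype.card G - k) * n) := by
  have h := isHomogeneous_coeff_prod_X_add_C (s := Finset.univ) (r := fun σ => -polyAct ρ σ a)
    (fun σ _ => (isHomogeneous_polyAct ρ σ ha).neg) hk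
  simpa [orbitPoly, sub_eq_add_neg] using h

theorem coeff_orbitPoly_mem_hilbertIdeal {a : MvPolynomial ι F} {n k : ℕ}
    (ha : a.IsHomogeneous n) (hn : 0 < n) (hk : k < Fintype.card G) :
    (orbitPoly ρ a).coeff k ∈ hilbertIdeal ρ :=
  Ideal.subset_span ⟨⟨_, Nat.mul_pos (by omega) hn, isHomogeneous_coeff_orbitPoly ρ ha hk.le⟩,
    isInv_coeff_orbitPoly ρ a k⟩

theorem pow_card_mem_hilbertIdeal {a : MvPolynomial ι F} {n : ℕ} (ha : a.IsHomogeneous n)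
    (hn : 0 < n) : a ^ Fintype.card G ∈ hilbertIdeal ρ := by
  rw [← natDegree_orbitPoly ρ a]
  refine (orbitPoly_monic ρ a).pow_natDegree_mem_of_eval_eq_zero (eval_orbitPoly_self ρ a)
    fun k hk => coeff_orbitPoly_mem_hilbertIdeal ρ ha hn ?_
  rwa [natDegree_orbitPoly] at hk

theorem mem_hilbertIdeal_of_isHomogeneous {f : MvPolynomial ι F} {e : ℕ}
    (hf : f.IsHomogeneous e) (he : Fintype.card ι * (Fintype.card G - 1) < e) :
    f ∈ hilbertIdeal ρ :=
  hf.mem_of_X_pow_mem (fun i => pow_card_mem_hilbertIdeal ρ (isHomogeneous_X F i) one_pos) he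

theorem le_topDeg {f : MvPolynomial ι F} {d : ℕ} (hf : f.IsHomogeneous d)
    (hfI : f ∉ hilbertIdeal ρ) : d ≤ topDeg ρ := by
  refine le_csSup ⟨Fintype.card ι * (Fintype.card G - 1), ?_⟩ ⟨f, hf, hfI⟩
  rintro e ⟨g, hg, hgI⟩
  exact not_lt.mp fun he => hgI (mem_hilbertIdeal_of_isHomogeneous ρ hg he)

theorem mem_hilbertIdeal_of_topDeg_lt {f : MvPolynomial ι F} {d : ℕ} (hf : f.IsHomogeneous d)
    (hd : topDeg ρ < d) : f ∈ hilbertIdeal ρ :=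
  not_not.mp fun hfI => hd.not_ge (le_topDeg ρ hf hfI)


theorem isInv_transfer (f : MvPolynomial ι F) : IsInv ρ (transfer ρ f) := by
  intro τ
  rw [transfer, ← polyActHom_apply, map_sum]
  simp only [polyActHom_apply, polyAct_polyAct]
  exact Equiv.sum_comp (Equiv.mulLeft τ) fun σ => polyAct ρ σ f

theorem transfer_mul_of_isInv (c t : MvPolynomial ι F) (ht : IsInv ρ t) :
    transfer ρ (c * t) = transfer ρ c * t := by
  rw [transfer, transfer, Finset.sum_mul]
  refine Finset.sum_congr rfl fun σ _ => ?_
  rw [← polyActHom_apply, map_mul, polyActHom_apply, polyActHom_apply, ht σ]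

theorem constantCoeff_transfer (hG : (Fintype.card G : F) = 0) (f : MvPolynomial ι F) :
    constantCoeff (transfer ρ f) = 0 := by
  simp [transfer, constantCoeff_polyAct, hG]

noncomputable def transferInv : MvPolynomial ι F →+ invAlg ρ where
  toFun f := ⟨transfer ρ f, isInv_transfer ρ f⟩
  map_zero' := Subtype.ext <| by simp [transfer, ← polyActHom_apply]
  map_add' f g := Subtype.ext <| by
    simp [transfer, ← polyActHom_apply, Finset.sum_add_distrib]

theorem transferInv_mul (c : MvPolynomial ι F) (t : invAlg ρ) :
    transferInv ρ (c * t) = transferInv ρ c * t :=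
  Subtype.ext (transfer_mul_of_isInv ρ c t t.2)

theorem transferInv_mem_augIdeal (hG : (Fintype.card G : F) = 0) (f : MvPolynomial ι F) :
    transferInv ρ f ∈ augIdeal ρ :=
  constantCoeff_transfer ρ hG f

theorem transferInv_mem_augIdeal_sq (hG : (Fintype.card G : F) = 0) {f : MvPolynomial ι F}
    (hf : f ∈ hilbertIdeal ρ) : transferInv ρ f ∈ augIdeal ρ ^ 2 := by
  -- strengthened to all multiples of `f`, so that the span induction goes through
  suffices ∀ c, transferInv ρ (c * f) ∈ augIdeal ρ ^ 2 by simpa using this 1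
  induction hf using Submodule.span_induction with
  | mem t ht =>
    obtain ⟨⟨n, hn, hhom⟩, hinv⟩ := ht
    intro c
    rw [show c * t = c * ((⟨t, hinv⟩ : invAlg ρ) : MvPolynomial ι F) from rfl, transferInv_mul,
      pow_two]
    exact Ideal.mul_mem_mul (transferInv_mem_augIdeal ρ hG c)
      (mem_augIdeal_of_isHomogeneous ρ _ hhom hn)
  | zero => simp
  | add x y _ _ hx hy =>
    intro c
    rw [mul_add, map_add]
    exact add_mem (hx c) (hy c)
  | smul a x _ hx =>
    intro c
    rw [smul_eq_mul, ← mul_assoc]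
    exact hx (c * a)
end

theorem transfer_mem_sq_general [Fintype G] (p : ℕ) [CharP F p]
    (hdvd : p ∣ Fintype.card G) (ρ : G →* (Matrix ι ι F)ˣ)
    (f : MvPolynomial ι F) (d : ℕ) (hf : f.IsHomogeneous d) (hd : topDeg ρ < d) :
    ∃ h : transfer ρ f ∈ invAlg ρ,
      (⟨transfer ρ f, h⟩ : ↥(invAlg ρ)) ∈ (augIdeal ρ) ^ 2 :=
  ⟨isInv_transfer ρ f, transferInv_mem_augIdeal_sq ρ ((CharP.cast_eq_zero_iff F p _).mpr hdvd)
    (mem_hilbertIdeal_of_topDeg_lt ρ hf hd)⟩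

/-- In the modular case (`char F = p > 0` divides `|G|`), if
`f ∈ F[V]` is homogeneous of degree strictly greater than `topdeg F[V]_G`, then
`Tr(f)` is a decomposable invariant: `Tr(f) ∈ (F[V]^G_+)²`. -/
theorem transfer_mem_sq [Fintype G] (p : ℕ) [CharP F p] (hp : p ≠ 0)
    (hdvd : p ∣ Fintype.card G) (ρ : G →* (Matrix ι ι F)ˣ)
    (f : MvPolynomial ι F) (d : ℕ) (hf : f.IsHomogeneous d) (hd : topDeg ρ < d) :
    ∃ h : transfer ρ f ∈ invAlg ρ,
      (⟨transfer ρ f, h⟩ : ↥(invAlg ρ)) ∈ (augIdeal ρ) ^ 2 :=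
  transfer_mem_sq_general p hdvd ρ f d hf hd
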